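/- The continuation set C is open and the stopping set S is closed (as subsets of [0,∞) × (0,∞)). Moreover C is connected in the φ variable: for all φ' > φ, if (x,φ) ∈ C then (x,φ') ∈ C. -/

import Mathlib

open MeasureTheory ProbabilityTheory Filter Set Topology
open scoped ENNReal NNReal

noncomputable section

variable {Ω : Type*}

/-- Running supremum `S_t = sup_{0 ≤ s ≤ t} (−μ₀ s − σ W_s)`. -/
def runSup (μ₀ σ : ℝ) (W : ℝ → Ω → ℝ) (t : ℝ) (ω : Ω) : ℝ :=
  ⨆ s : Icc (0 : ℝ) t, (-μ₀ * (s : ℝ) - σ * W (s : ℝ) ω)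

/-- Reflecting local time `A^x_t = max(x, S_t) − x`. -/
def locA (μ₀ σ : ℝ) (W : ℝ → Ω → ℝ) (x t : ℝ) (ω : Ω) : ℝ :=
  max x (runSup μ₀ σ W t ω) - x

/-- Reflected Brownian motion with drift `μ₀`: `X̂^x_t = x + μ₀ t + σ W_t + A^x_t`. -/
def Xhat (μ₀ σ : ℝ) (W : ℝ → Ω → ℝ) (x t : ℝ) (ω : Ω) : ℝ :=
  x + μ₀ * t + σ * W t ω + locA μ₀ σ W x t ω

/-- Signal-to-noise ratio `θ = (μ₁ − μ₀)/σ`. -/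
def snr (μ₀ μ₁ σ : ℝ) : ℝ := (μ₁ - μ₀) / σ

/-- Likelihood ratio process `Φ̂^{x,φ}_t = φ exp(θ W_t − θ²t/2 + (2θ/σ) A^x_t)`. -/
def Phihat (μ₀ μ₁ σ : ℝ) (W : ℝ → Ω → ℝ) (x φ t : ℝ) (ω : Ω) : ℝ :=
  φ * Real.exp (snr μ₀ μ₁ σ * W t ω - snr μ₀ μ₁ σ ^ 2 / 2 * t
    + 2 * snr μ₀ μ₁ σ / σ * locA μ₀ σ W x t ω)

/-- `W` is a standard Brownian motion w.r.t. the filtration `F` under `P`. -/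
structure IsBrownian [mΩ : MeasurableSpace Ω] (P : Measure Ω) (F : Filtration ℝ mΩ)
    (W : ℝ → Ω → ℝ) : Prop where
  isProb : IsProbabilityMeasure P
  start : ∀ ω, W 0 ω = 0
  cont : ∀ ω, Continuous fun t => W t ω
  adapted : Adapted F W
  incr_law : ∀ s t : ℝ, 0 ≤ s → s ≤ t →
    P.map (fun ω => W t ω - W s ω) = gaussianReal 0 (Real.toNNReal (t - s))
  incr_indep : ∀ s t : ℝ, 0 ≤ s → s ≤ t →
    Indep (MeasurableSpace.comap (fun ω => W t ω - W s ω) Real.measurableSpace) (F s) P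

/-- A (possibly infinite) stopping time of the filtration `F`. -/
def IsStoppingTimeE [mΩ : MeasurableSpace Ω] (F : Filtration ℝ mΩ) (τ : Ω → ℝ≥0∞) : Prop :=
  ∀ t : ℝ, MeasurableSet[F t] {ω | τ ω ≤ ENNReal.ofReal t}

/-- The gain `exp((2μ₀/σ²) A^x_τ − ρτ)(1 + Φ̂^{x,φ}_τ) 1_{τ<∞}`. -/
def gain (μ₀ μ₁ σ ρ : ℝ) (W : ℝ → Ω → ℝ) (x φ : ℝ) (τ : Ω → ℝ≥0∞) (ω : Ω) : ℝ :=
  if τ ω < ⊤ then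
    Real.exp (2 * μ₀ / σ ^ 2 * locA μ₀ σ W x (τ ω).toReal ω - ρ * (τ ω).toReal)
      * (1 + Phihat μ₀ μ₁ σ W x φ (τ ω).toReal ω)
  else 0

/-- The value function `Ū(x,φ)` of the optimal stopping problem. -/
def valueU [mΩ : MeasurableSpace Ω] (P : Measure Ω) (F : Filtration ℝ mΩ)
    (μ₀ μ₁ σ ρ : ℝ) (W : ℝ → Ω → ℝ) (x φ : ℝ) : ℝ :=
  sSup {r : ℝ | ∃ τ : Ω → ℝ≥0∞, IsStoppingTimeE F τ ∧
    r = ∫ ω, gain μ₀ μ₁ σ ρ W x φ τ ω ∂P}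

/-- `ζ_n = inf{t ≥ 0 : Φ̂^{x,φ}_t ≥ n}`. -/
def zetaN (μ₀ μ₁ σ : ℝ) (W : ℝ → Ω → ℝ) (n : ℕ) (x φ : ℝ) (ω : Ω) : ℝ≥0∞ :=
  sInf {t : ℝ≥0∞ | ∃ s : ℝ, 0 ≤ s ∧ t = ENNReal.ofReal s ∧
    (n : ℝ) ≤ Phihat μ₀ μ₁ σ W x φ s ω}

/-- The truncated value function `Ū^n(x,φ)`. -/
def valueUn [mΩ : MeasurableSpace Ω] (P : Measure Ω) (F : Filtration ℝ mΩ)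
    (μ₀ μ₁ σ ρ : ℝ) (W : ℝ → Ω → ℝ) (n : ℕ) (x φ : ℝ) : ℝ :=
  sSup {r : ℝ | ∃ τ : Ω → ℝ≥0∞, IsStoppingTimeE F τ ∧
    (∀ᵐ ω ∂P, τ ω ≤ zetaN μ₀ μ₁ σ W n x φ ω) ∧
    r = ∫ ω, gain μ₀ μ₁ σ ρ W x φ τ ω ∂P}

end

noncomputable section

variable {Ω : Type*}

/-- The continuation set `C = {(x,φ) ∈ [0,∞)×(0,∞) : Ū(x,φ) > 1 + φ}`. -/
def contSet [mΩ : MeasurableSpace Ω] (P : Measure Ω) (F : Filtration ℝ mΩ)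
    (μ₀ μ₁ σ ρ : ℝ) (W : ℝ → Ω → ℝ) : Set (ℝ × ℝ) :=
  {p : ℝ × ℝ | 0 ≤ p.1 ∧ 0 < p.2 ∧ 1 + p.2 < valueU P F μ₀ μ₁ σ ρ W p.1 p.2}

/-- The stopping set `S = {(x,φ) ∈ [0,∞)×(0,∞) : Ū(x,φ) = 1 + φ}`. -/
def stopSet [mΩ : MeasurableSpace Ω] (P : Measure Ω) (F : Filtration ℝ mΩ)
    (μ₀ μ₁ σ ρ : ℝ) (W : ℝ → Ω → ℝ) : Set (ℝ × ℝ) :=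
  {p : ℝ × ℝ | 0 ≤ p.1 ∧ 0 < p.2 ∧ valueU P F μ₀ μ₁ σ ρ W p.1 p.2 = 1 + p.2}

/-- `τ* = inf{t ≥ 0 : (X̂_t, Φ̂_t) ∉ C}`. -/
def tauStar [mΩ : MeasurableSpace Ω] (P : Measure Ω) (F : Filtration ℝ mΩ)
    (μ₀ μ₁ σ ρ : ℝ) (W : ℝ → Ω → ℝ) (x φ : ℝ) (ω : Ω) : ℝ≥0∞ :=
  sInf {t : ℝ≥0∞ | ∃ s : ℝ, 0 ≤ s ∧ t = ENNReal.ofReal s ∧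
    (Xhat μ₀ σ W x s ω, Phihat μ₀ μ₁ σ W x φ s ω) ∉ contSet P F μ₀ μ₁ σ ρ W}

end

/-!
Changing the starting point from `(x, φ)` to `(x', φ')` changes the gain of every stopping time,
pathwise, by a factor at most `exp (K |x' - x|) * max φ φ' / φ`: the local time `A^x` is
`1`-Lipschitz in `x`, and the gain is affine in `φ`. Hence `Ū(x', φ') ≤ L · Ū(x, φ)` with a
factor `L → 1` as `(x', φ') → (x, φ)`, so `Ū` is continuous on `φ > 0`; `C` and `S` are then
the sets where the continuous function `Ū - (1 + φ)` is positive, resp. zero. For a fixed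
stopping time the expected gain is affine in `φ` with value at most `1` at `φ = 0` (since
`μ₀ < 0`), while `1 + φ` is affine with value `1` there; so once the expected gain exceeds
`1 + φ`, it does so for every larger `φ`.
-/

section Topology

theorem continuousAt_of_le_mul {X : Type*} [TopologicalSpace X] {v : X → ℝ} {L : X → X → ℝ}
    {p : X} (hle : ∀ᶠ q in 𝓝 p, v q ≤ L p q * v p ∧ v p ≤ L q p * v q)
    (hL : Tendsto (L p) (𝓝 p) (𝓝 1)) (hL' : Tendsto (fun q => L q p) (𝓝 p) (𝓝 1)) :
    ContinuousAt v p := by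
  have hupper : Tendsto (fun q => L p q * v p) (𝓝 p) (𝓝 (v p)) := by
    simpa using hL.mul_const (v p)
  have hlower : Tendsto (fun q => v p / L q p) (𝓝 p) (𝓝 (v p)) := by
    have := (tendsto_const_nhds (x := v p)).div hL' one_ne_zero
    rwa [div_one] at this
  have hpos : ∀ᶠ q in 𝓝 p, 0 < L q p := hL'.eventually (lt_mem_nhds one_pos)
  refine tendsto_of_tendsto_of_tendsto_of_le_of_le' hlower hupper ?_ (hle.mono fun q hq => hq.1)
  filter_upwards [hle, hpos] with q hq hq'
  rw [div_le_iff₀ hq']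
  linarith [hq.2]

theorem exists_isOpen_inter_eq_setOf_lt {X : Type*} [TopologicalSpace X] {f g : X → ℝ}
    {U D : Set X} (hU : IsOpen U) (hDU : D ⊆ U) (hf : ContinuousOn f U) (hg : ContinuousOn g U) :
    ∃ V, IsOpen V ∧ {p | p ∈ D ∧ f p < g p} = V ∩ D := by
  refine ⟨U ∩ (fun p => g p - f p) ⁻¹' Ioi 0, (hg.sub hf).isOpen_inter_preimage hU isOpen_Ioi, ?_⟩
  ext p
  simp only [mem_ofPred_eq, mem_inter_iff, mem_preimage, mem_Ioi, sub_pos]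
  exact ⟨fun ⟨hD, h⟩ => ⟨⟨hDU hD, h⟩, hD⟩, fun ⟨⟨_, h⟩, hD⟩ => ⟨hD, h⟩⟩

theorem exists_isClosed_inter_eq_setOf_eq {X : Type*} [TopologicalSpace X] {f g : X → ℝ}
    {U D : Set X} (hU : IsOpen U) (hDU : D ⊆ U) (hf : ContinuousOn f U) (hg : ContinuousOn g U) :
    ∃ V, IsClosed V ∧ {p | p ∈ D ∧ f p = g p} = V ∩ D := by
  refine ⟨(U ∩ (fun p => f p - g p) ⁻¹' {0}ᶜ)ᶜ,
    ((hf.sub hg).isOpen_inter_preimage hU isOpen_compl_singleton).isClosed_compl, ?_⟩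
  ext p
  simp only [mem_ofPred_eq, mem_inter_iff, mem_compl_iff, mem_preimage, mem_singleton_iff,
    sub_eq_zero, not_and, not_not]
  exact ⟨fun ⟨hD, h⟩ => ⟨fun _ => h, hD⟩, fun ⟨h, hD⟩ => ⟨hD, h (hDU hD)⟩⟩

end Topology

theorem exp_le_exp_abs_mul_mul_exp {u u' c a a' δ : ℝ} (hu : u' - u = c * (a' - a))
    (ha : |a' - a| ≤ δ) : Real.exp u' ≤ Real.exp (|c| * δ) * Real.exp u := by
  rw [← Real.exp_add, Real.exp_le_exp]
  have : c * (a' - a) ≤ |c| * δ :=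
    (le_abs_self _).trans (abs_mul c _ ▸ mul_le_mul_of_nonneg_left ha (abs_nonneg c))
  linarith

theorem one_add_mul_le_mul_max_div {φ φ' E E' N : ℝ} (hφ : 0 < φ) (hφ' : 0 ≤ φ') (hE : 0 ≤ E)
    (hN : 1 ≤ N) (hE' : E' ≤ N * E) :
    1 + φ' * E' ≤ N * (max φ φ' / φ) * (1 + φ * E) := by
  set r := max φ φ' / φ
  have hr : 1 ≤ r := (one_le_div hφ).2 (le_max_left φ φ')
  have hφr : φ' ≤ r * φ := by rw [div_mul_cancel₀ _ hφ.ne']; exact le_max_right φ φ'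
  have h1 : φ' * E' ≤ r * φ * (N * E) :=
    (mul_le_mul_of_nonneg_left hE' hφ').trans
      (mul_le_mul_of_nonneg_right hφr (by positivity))
  nlinarith

noncomputable section

def compFactor (K : ℝ) (p q : ℝ × ℝ) : ℝ :=
  Real.exp (K * |q.1 - p.1|) * (max p.2 q.2 / p.2)

theorem tendsto_compFactor_right (K : ℝ) {p : ℝ × ℝ} (hp : p.2 ≠ 0) :
    Tendsto (compFactor K p) (𝓝 p) (𝓝 1) := by
  have hc : Continuous (compFactor K p) := by
    unfold compFactor
    fun_prop
  simpa [compFactor, hp] using hc.tendsto p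

theorem tendsto_compFactor_left (K : ℝ) {p : ℝ × ℝ} (hp : p.2 ≠ 0) :
    Tendsto (fun q => compFactor K q p) (𝓝 p) (𝓝 1) := by
  have hc : ContinuousAt (fun q => compFactor K q p) p := by
    unfold compFactor
    exact ContinuousAt.mul (by fun_prop)
      ((continuous_snd.max continuous_const).continuousAt.div continuousAt_snd hp)
  simpa [compFactor, hp] using hc.tendsto

theorem compFactor_pos (K : ℝ) {p : ℝ × ℝ} (hp : 0 < p.2) (q : ℝ × ℝ) : 0 < compFactor K p q :=
  mul_pos (Real.exp_pos _) (div_pos (hp.trans_le (le_max_left _ _)) hp)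

section Pathwise

variable {Ω : Type*} {W : ℝ → Ω → ℝ} {μ₀ μ₁ σ ρ : ℝ}

theorem locA_nonneg (x t : ℝ) (ω : Ω) : 0 ≤ locA μ₀ σ W x t ω :=
  sub_nonneg.2 (le_max_left _ _)

theorem abs_locA_sub_locA_le (x x' t : ℝ) (ω : Ω) :
    |locA μ₀ σ W x' t ω - locA μ₀ σ W x t ω| ≤ |x' - x| := by
  have h (y : ℝ) : locA μ₀ σ W y t ω = max (runSup μ₀ σ W t ω - y) 0 := by
    rw [locA, max_comm, ← sub_self y, max_sub_sub_right]
  rw [h, h]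
  calc _ ≤ |(runSup μ₀ σ W t ω - x') - (runSup μ₀ σ W t ω - x)| := abs_max_sub_max_le_abs _ _ _
    _ = |x' - x| := by rw [sub_sub_sub_cancel_left, abs_sub_comm]

theorem gain_nonneg {x φ : ℝ} (hφ : 0 ≤ φ) (τ : Ω → ℝ≥0∞) (ω : Ω) :
    0 ≤ gain μ₀ μ₁ σ ρ W x φ τ ω := by
  unfold gain Phihat
  split_ifs <;> positivity

theorem gain_zero_le_one (hμ₀ : μ₀ ≤ 0) (hρ : 0 ≤ ρ) (x : ℝ) (τ : Ω → ℝ≥0∞) (ω : Ω) :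
    gain μ₀ μ₁ σ ρ W x 0 τ ω ≤ 1 := by
  unfold gain
  split_ifs
  · have hc : 2 * μ₀ / σ ^ 2 ≤ 0 := div_nonpos_of_nonpos_of_nonneg (by linarith) (sq_nonneg σ)
    have hA := locA_nonneg (μ₀ := μ₀) (σ := σ) (W := W) x (τ ω).toReal ω
    rw [Phihat, zero_mul, add_zero, mul_one, Real.exp_le_one_iff]
    nlinarith [mul_nonneg hρ (ENNReal.toReal_nonneg (a := τ ω))]
  · exact zero_le_one

theorem gain_eq_affine {x φ : ℝ} (hφ : φ ≠ 0) (φ' : ℝ) (τ : Ω → ℝ≥0∞) (ω : Ω) :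
    gain μ₀ μ₁ σ ρ W x φ' τ ω
      = (1 - φ' / φ) * gain μ₀ μ₁ σ ρ W x 0 τ ω + φ' / φ * gain μ₀ μ₁ σ ρ W x φ τ ω := by
  unfold gain Phihat
  split_ifs
  · field_simp
    ring
  · ring

/-- The constant `K` above: the exponents in `gain` are `2μ₀/σ² · A` and `2θ/σ · A` plus terms
independent of the local time `A`. -/
def gainLip (μ₀ μ₁ σ : ℝ) : ℝ := |2 * μ₀ / σ ^ 2| + |2 * snr μ₀ μ₁ σ / σ|

theorem gain_le_compFactor_mul {x x' φ φ' : ℝ} (hφ : 0 < φ) (hφ' : 0 < φ')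
    (τ : Ω → ℝ≥0∞) (ω : Ω) :
    gain μ₀ μ₁ σ ρ W x' φ' τ ω
      ≤ compFactor (gainLip μ₀ μ₁ σ) (x, φ) (x', φ') * gain μ₀ μ₁ σ ρ W x φ τ ω := by
  unfold gain Phihat
  split_ifs with hτ
  · set t := (τ ω).toReal
    set A := locA μ₀ σ W x t ω
    set A' := locA μ₀ σ W x' t ω
    set c := 2 * μ₀ / σ ^ 2
    set d := 2 * snr μ₀ μ₁ σ / σ
    set b := snr μ₀ μ₁ σ * W t ω - snr μ₀ μ₁ σ ^ 2 / 2 * t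
    have hA : |A' - A| ≤ |x' - x| := abs_locA_sub_locA_le x x' t ω
    have hdisc := exp_le_exp_abs_mul_mul_exp (u := c * A - ρ * t) (u' := c * A' - ρ * t)
      (c := c) (by ring) hA
    have hlr := exp_le_exp_abs_mul_mul_exp (u := b + d * A) (u' := b + d * A') (c := d)
      (by ring) hA
    have hbracket := one_add_mul_le_mul_max_div hφ hφ'.le (Real.exp_pos _).le
      (Real.one_le_exp (by positivity)) hlr
    have hsplit : compFactor (gainLip μ₀ μ₁ σ) (x, φ) (x', φ')
        = Real.exp (|c| * |x' - x|) * (Real.exp (|d| * |x' - x|) * (max φ φ' / φ)) := by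
      rw [compFactor, gainLip, add_mul, Real.exp_add]
      ring
    calc _ ≤ (Real.exp (|c| * |x' - x|) * Real.exp (c * A - ρ * t))
          * (Real.exp (|d| * |x' - x|) * (max φ φ' / φ) * (1 + φ * Real.exp (b + d * A))) :=
          mul_le_mul hdisc hbracket (by positivity) (by positivity)
      _ = _ := by rw [hsplit]; ring
  · rw [mul_zero]

end Pathwise

section Measurability

variable {Ω : Type*} [mΩ : MeasurableSpace Ω]

theorem IsStoppingTimeE.measurable {F : Filtration ℝ mΩ} {τ : Ω → ℝ≥0∞}
    (hτ : IsStoppingTimeE F τ) : Measurable τ := by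
  refine measurable_of_Iic fun a => ?_
  rcases eq_or_ne a ⊤ with rfl | ha
  · simp
  · have : τ ⁻¹' Iic a = {ω | τ ω ≤ ENNReal.ofReal a.toReal} := by
      simp [ENNReal.ofReal_toReal ha, preimage, Iic]
    exact this ▸ F.le _ _ (hτ a.toReal)

theorem iSup_Icc_eq_iSup_dense {f : ℝ → ℝ} (hf : Continuous f) {t : ℝ} (ht : 0 ≤ t)
    {S : Set (Icc (0 : ℝ) 1)} (hS : Dense S) :
    ⨆ s : Icc (0 : ℝ) t, f s = ⨆ r : S, f ((r : ℝ) * t) := by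
  have himage : (· * t) '' Icc (0 : ℝ) 1 = Icc 0 t := by
    simpa using image_mul_right_Icc zero_le_one ht
  calc ⨆ s : Icc (0 : ℝ) t, f s = sSup (f '' Icc 0 t) := by rw [image_eq_range]; rfl
    _ = sSup ((fun r => f (r * t)) '' Icc 0 1) := by rw [← himage, image_image]
    _ = ⨆ r : Icc (0 : ℝ) 1, f (r * t) := by rw [image_eq_range]; rfl
    _ = ⨆ r : S, f ((r : ℝ) * t) := (hS.ciSup' (by fun_prop)).symm

theorem measurable_runSup_comp {W : ℝ → Ω → ℝ} (hW : ∀ t, Measurable (W t))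
    (hWc : ∀ ω, Continuous fun t => W t ω) {g : Ω → ℝ} (hg : Measurable g) (hg0 : ∀ ω, 0 ≤ g ω)
    (μ₀ σ : ℝ) : Measurable fun ω => runSup μ₀ σ W (g ω) ω := by
  obtain ⟨S, hSc, hS⟩ := TopologicalSpace.exists_countable_dense (Icc (0 : ℝ) 1)
  have : Countable S := hSc.to_subtype
  have hW₂ : Measurable (Function.uncurry W) :=
    measurable_uncurry_of_continuous_of_measurable hWc hW
  have heq : (fun ω => runSup μ₀ σ W (g ω) ω)
      = fun ω => ⨆ r : S, (-μ₀ * ((r : ℝ) * g ω) - σ * W ((r : ℝ) * g ω) ω) :=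
    funext fun ω => iSup_Icc_eq_iSup_dense (f := fun s => -μ₀ * s - σ * W s ω)
      (by fun_prop) (hg0 ω) hS
  rw [heq]
  refine Measurable.iSup fun r => ?_
  have : Measurable fun ω => W ((r : ℝ) * g ω) ω := hW₂.comp ((hg.const_mul _).prodMk measurable_id)
  fun_prop

theorem measurable_gain {P : Measure Ω} {F : Filtration ℝ mΩ} {W : ℝ → Ω → ℝ}
    (hBM : IsBrownian P F W) (μ₀ μ₁ σ ρ x φ : ℝ) {τ : Ω → ℝ≥0∞} (hτ : IsStoppingTimeE F τ) :
    Measurable (gain μ₀ μ₁ σ ρ W x φ τ) := by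
  have hW (t : ℝ) : Measurable (W t) := (hBM.adapted t).mono (F.le t) le_rfl
  have hτm := hτ.measurable
  have ht : Measurable fun ω => (τ ω).toReal := ENNReal.measurable_toReal.comp hτm
  have hWt : Measurable fun ω => W (τ ω).toReal ω :=
    (measurable_uncurry_of_continuous_of_measurable hBM.cont hW).comp (ht.prodMk measurable_id)
  have hA : Measurable fun ω => locA μ₀ σ W x (τ ω).toReal ω :=
    (measurable_const.max (measurable_runSup_comp hW hBM.cont ht (fun _ => ENNReal.toReal_nonneg)
      μ₀ σ)).sub_const x
  unfold gain Phihat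
  refine Measurable.ite (measurableSet_lt hτm measurable_const) ?_ measurable_const
  exact ((hA.const_mul _).sub (ht.const_mul _)).exp.mul (measurable_const.add
    ((((hWt.const_mul _).sub (ht.const_mul _)).add (hA.const_mul _)).exp.const_mul φ))

end Measurability

section Value

variable {Ω : Type*} [mΩ : MeasurableSpace Ω] {P : Measure Ω} {F : Filtration ℝ mΩ}
  {W : ℝ → Ω → ℝ} {μ₀ μ₁ σ ρ : ℝ}

def stoppingValues (P : Measure Ω) (F : Filtration ℝ mΩ) (μ₀ μ₁ σ ρ : ℝ) (W : ℝ → Ω → ℝ)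
    (x φ : ℝ) : Set ℝ :=
  {r | ∃ τ : Ω → ℝ≥0∞, IsStoppingTimeE F τ ∧ r = ∫ ω, gain μ₀ μ₁ σ ρ W x φ τ ω ∂P}

theorem valueU_eq_sSup_stoppingValues (x φ : ℝ) :
    valueU P F μ₀ μ₁ σ ρ W x φ = sSup (stoppingValues P F μ₀ μ₁ σ ρ W x φ) := rfl

theorem zero_mem_stoppingValues (x φ : ℝ) : 0 ∈ stoppingValues P F μ₀ μ₁ σ ρ W x φ :=
  ⟨fun _ => ⊤, fun t => by simp [ENNReal.ofReal_ne_top], by simp [gain]⟩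

theorem valueU_nonneg {x φ : ℝ} (hφ : 0 ≤ φ) : 0 ≤ valueU P F μ₀ μ₁ σ ρ W x φ :=
  Real.sSup_nonneg <| by
    rintro _ ⟨τ, -, rfl⟩
    exact integral_nonneg (gain_nonneg hφ τ)

theorem integrable_gain_of_integrable_gain (hBM : IsBrownian P F W) {x x' φ φ' : ℝ}
    (hφ : 0 < φ) (hφ' : 0 < φ') {τ : Ω → ℝ≥0∞} (hτ : IsStoppingTimeE F τ)
    (h : Integrable (gain μ₀ μ₁ σ ρ W x φ τ) P) : Integrable (gain μ₀ μ₁ σ ρ W x' φ' τ) P :=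
  (h.const_mul _).mono' (measurable_gain hBM μ₀ μ₁ σ ρ x' φ' hτ).aestronglyMeasurable <|
    ae_of_all _ fun ω => by
      rw [Real.norm_of_nonneg (gain_nonneg hφ'.le τ ω)]
      exact gain_le_compFactor_mul hφ hφ' τ ω

theorem integral_gain_le_compFactor_mul (hBM : IsBrownian P F W) {x x' φ φ' : ℝ}
    (hφ : 0 < φ) (hφ' : 0 < φ') {τ : Ω → ℝ≥0∞} (hτ : IsStoppingTimeE F τ)
    (hb : BddAbove (stoppingValues P F μ₀ μ₁ σ ρ W x φ)) :
    ∫ ω, gain μ₀ μ₁ σ ρ W x' φ' τ ω ∂P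
      ≤ compFactor (gainLip μ₀ μ₁ σ) (x, φ) (x', φ') * valueU P F μ₀ μ₁ σ ρ W x φ := by
  have hL := (compFactor_pos (gainLip μ₀ μ₁ σ) (p := (x, φ)) hφ (x', φ')).le
  by_cases hint : Integrable (gain μ₀ μ₁ σ ρ W x φ τ) P
  · calc ∫ ω, gain μ₀ μ₁ σ ρ W x' φ' τ ω ∂P
        ≤ ∫ ω, compFactor (gainLip μ₀ μ₁ σ) (x, φ) (x', φ') * gain μ₀ μ₁ σ ρ W x φ τ ω ∂P :=
          integral_mono_of_nonneg (ae_of_all _ (gain_nonneg hφ'.le τ)) (hint.const_mul _)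
            (ae_of_all _ (gain_le_compFactor_mul hφ hφ' τ))
      _ = compFactor (gainLip μ₀ μ₁ σ) (x, φ) (x', φ') * ∫ ω, gain μ₀ μ₁ σ ρ W x φ τ ω ∂P :=
          integral_const_mul _ _
      _ ≤ _ := mul_le_mul_of_nonneg_left (le_csSup hb ⟨τ, hτ, rfl⟩) hL
  · rw [integral_undef (mt (integrable_gain_of_integrable_gain hBM hφ' hφ hτ) hint)]
    exact mul_nonneg hL (valueU_nonneg hφ.le)

theorem bddAbove_stoppingValues_of_bddAbove (hBM : IsBrownian P F W) {x x' φ φ' : ℝ}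
    (hφ : 0 < φ) (hφ' : 0 < φ') (hb : BddAbove (stoppingValues P F μ₀ μ₁ σ ρ W x φ)) :
    BddAbove (stoppingValues P F μ₀ μ₁ σ ρ W x' φ') :=
  ⟨_, by
    rintro _ ⟨τ, hτ, rfl⟩
    exact integral_gain_le_compFactor_mul hBM hφ hφ' hτ hb⟩

/-- If the expected gains at `(x, φ)` are unbounded, so are those at `(x', φ')`, and both sides
are `0`, the junk value of `sSup`. -/
theorem valueU_le_compFactor_mul (hBM : IsBrownian P F W) {x x' φ φ' : ℝ}
    (hφ : 0 < φ) (hφ' : 0 < φ') :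
    valueU P F μ₀ μ₁ σ ρ W x' φ'
      ≤ compFactor (gainLip μ₀ μ₁ σ) (x, φ) (x', φ') * valueU P F μ₀ μ₁ σ ρ W x φ := by
  by_cases hb : BddAbove (stoppingValues P F μ₀ μ₁ σ ρ W x φ)
  · refine csSup_le ⟨0, zero_mem_stoppingValues x' φ'⟩ ?_
    rintro _ ⟨τ, hτ, rfl⟩
    exact integral_gain_le_compFactor_mul hBM hφ hφ' hτ hb
  · have hb' := mt (bddAbove_stoppingValues_of_bddAbove (x := x') hBM hφ' hφ) hb
    rw [valueU_eq_sSup_stoppingValues, valueU_eq_sSup_stoppingValues,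
      Real.sSup_of_not_bddAbove hb, Real.sSup_of_not_bddAbove hb', mul_zero]

theorem continuousOn_valueU (hBM : IsBrownian P F W) :
    ContinuousOn (fun p : ℝ × ℝ => valueU P F μ₀ μ₁ σ ρ W p.1 p.2) {p | 0 < p.2} := by
  intro p hp
  refine (continuousAt_of_le_mul (L := compFactor (gainLip μ₀ μ₁ σ)) ?_
    (tendsto_compFactor_right _ hp.ne') (tendsto_compFactor_left _ hp.ne')).continuousWithinAt
  filter_upwards [(isOpen_lt continuous_const continuous_snd).mem_nhds hp] with q hq
  exact ⟨valueU_le_compFactor_mul hBM hp hq, valueU_le_compFactor_mul hBM hq hp⟩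

theorem one_add_lt_integral_gain_of_lt (hμ₀ : μ₀ ≤ 0) (hρ : 0 ≤ ρ) (hBM : IsBrownian P F W)
    {x φ φ' : ℝ} (hφ : 0 < φ) (hφφ' : φ < φ') {τ : Ω → ℝ≥0∞} (hτ : IsStoppingTimeE F τ)
    (h : 1 + φ < ∫ ω, gain μ₀ μ₁ σ ρ W x φ τ ω ∂P) :
    1 + φ' < ∫ ω, gain μ₀ μ₁ σ ρ W x φ' τ ω ∂P := by
  have := hBM.isProb
  have hint : Integrable (gain μ₀ μ₁ σ ρ W x φ τ) P := by
    by_contra hn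
    rw [integral_undef hn] at h
    linarith
  have hint₀ : Integrable (gain μ₀ μ₁ σ ρ W x 0 τ) P :=
    (integrable_const 1).mono' (measurable_gain hBM μ₀ μ₁ σ ρ x 0 hτ).aestronglyMeasurable <|
      ae_of_all _ fun ω => by
        rw [Real.norm_of_nonneg (gain_nonneg le_rfl τ ω)]
        exact gain_zero_le_one hμ₀ hρ x τ ω
  have hb : ∫ ω, gain μ₀ μ₁ σ ρ W x 0 τ ω ∂P ≤ 1 := by
    simpa using integral_mono hint₀ (integrable_const 1) (gain_zero_le_one hμ₀ hρ x τ)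
  set c := φ' / φ with hc_def
  have hc : 1 < c := (one_lt_div hφ).2 hφφ'
  rw [show gain μ₀ μ₁ σ ρ W x φ' τ = fun ω => (1 - c) * gain μ₀ μ₁ σ ρ W x 0 τ ω
      + c * gain μ₀ μ₁ σ ρ W x φ τ ω from funext (gain_eq_affine hφ.ne' φ' τ),
    integral_add (hint₀.const_mul _) (hint.const_mul _), integral_const_mul, integral_const_mul]
  calc 1 + φ' = (1 - c) * 1 + c * (1 + φ) := by rw [hc_def]; field_simp; ring
    _ < _ := by
      nlinarith [mul_nonneg (sub_nonneg.2 hc.le) (sub_nonneg.2 hb),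
        mul_pos (zero_lt_one.trans hc) (sub_pos.2 h)]

theorem one_add_lt_valueU_of_lt (hμ₀ : μ₀ ≤ 0) (hρ : 0 ≤ ρ) (hBM : IsBrownian P F W)
    {x φ φ' : ℝ} (hφ : 0 < φ) (hφφ' : φ < φ') (h : 1 + φ < valueU P F μ₀ μ₁ σ ρ W x φ) :
    1 + φ' < valueU P F μ₀ μ₁ σ ρ W x φ' := by
  have hb : BddAbove (stoppingValues P F μ₀ μ₁ σ ρ W x φ) := by
    by_contra hb
    rw [valueU_eq_sSup_stoppingValues, Real.sSup_of_not_bddAbove hb] at h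
    linarith
  obtain ⟨_, ⟨τ, hτ, rfl⟩, hτφ⟩ := exists_lt_of_lt_csSup ⟨0, zero_mem_stoppingValues x φ⟩ h
  exact (one_add_lt_integral_gain_of_lt hμ₀ hρ hBM hφ hφφ' hτ hτφ).trans_le
    (le_csSup (bddAbove_stoppingValues_of_bddAbove hBM hφ (hφ.trans hφφ') hb) ⟨τ, hτ, rfl⟩)

end Value

end

theorem continuation_set_open_stopping_set_closed_connected_general
    {Ω : Type*} [mΩ : MeasurableSpace Ω] (P : Measure Ω) (F : Filtration ℝ mΩ)
    (W : ℝ → Ω → ℝ) (μ₀ μ₁ σ ρ : ℝ)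
    (hμ₀ : μ₀ < 0) (hρ : 0 < ρ)
    (hBM : IsBrownian P F W) :
    (∃ V : Set (ℝ × ℝ), IsOpen V ∧
      contSet P F μ₀ μ₁ σ ρ W = V ∩ (Set.Ici (0:ℝ) ×ˢ Set.Ioi (0:ℝ))) ∧
    (∃ V : Set (ℝ × ℝ), IsClosed V ∧
      stopSet P F μ₀ μ₁ σ ρ W = V ∩ (Set.Ici (0:ℝ) ×ˢ Set.Ioi (0:ℝ))) ∧
    (∀ x φ φ' : ℝ, (x, φ) ∈ contSet P F μ₀ μ₁ σ ρ W → φ < φ' →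
      (x, φ') ∈ contSet P F μ₀ μ₁ σ ρ W) := by
  have hU : IsOpen {p : ℝ × ℝ | 0 < p.2} := isOpen_lt continuous_const continuous_snd
  have hDU : Ici (0 : ℝ) ×ˢ Ioi (0 : ℝ) ⊆ {p | 0 < p.2} := fun _ hp => hp.2
  have hv := continuousOn_valueU (P := P) (F := F) (μ₀ := μ₀) (μ₁ := μ₁) (σ := σ) (ρ := ρ) hBM
  have h1 : ContinuousOn (fun p : ℝ × ℝ => 1 + p.2) {p | 0 < p.2} := by fun_prop
  have hC : contSet P F μ₀ μ₁ σ ρ W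
      = {p | p ∈ Ici (0 : ℝ) ×ˢ Ioi (0 : ℝ) ∧ 1 + p.2 < valueU P F μ₀ μ₁ σ ρ W p.1 p.2} := by
    ext p
    simp [contSet, and_assoc]
  have hS : stopSet P F μ₀ μ₁ σ ρ W
      = {p | p ∈ Ici (0 : ℝ) ×ˢ Ioi (0 : ℝ) ∧ valueU P F μ₀ μ₁ σ ρ W p.1 p.2 = 1 + p.2} := by
    ext p
    simp [stopSet, and_assoc]
  refine ⟨hC ▸ exists_isOpen_inter_eq_setOf_lt hU hDU h1 hv,
    hS ▸ exists_isClosed_inter_eq_setOf_eq hU hDU hv h1, ?_⟩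
  rintro x φ φ' ⟨hx, hφ, h⟩ hφφ'
  exact ⟨hx, hφ.trans hφφ', one_add_lt_valueU_of_lt hμ₀.le hρ.le hBM hφ hφφ' h⟩

/-- Corollary 4.6: `C` is (relatively) open and `S` is (relatively) closed in
`[0,∞) × (0,∞)`, and `C` is connected in the `φ` variable. -/
theorem continuation_set_open_stopping_set_closed_connected
    {Ω : Type*} [mΩ : MeasurableSpace Ω] (P : Measure Ω) (F : Filtration ℝ mΩ)
    (W : ℝ → Ω → ℝ) (μ₀ μ₁ σ ρ : ℝ)
    (hμ₀ : μ₀ < 0) (hμ₁ : 0 < μ₁) (hσ : 0 < σ) (hρ : 0 < ρ)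
    (hBM : IsBrownian P F W) :
    (∃ V : Set (ℝ × ℝ), IsOpen V ∧
      contSet P F μ₀ μ₁ σ ρ W = V ∩ (Set.Ici (0:ℝ) ×ˢ Set.Ioi (0:ℝ))) ∧
    (∃ V : Set (ℝ × ℝ), IsClosed V ∧
      stopSet P F μ₀ μ₁ σ ρ W = V ∩ (Set.Ici (0:ℝ) ×ˢ Set.Ioi (0:ℝ))) ∧
    (∀ x φ φ' : ℝ, (x, φ) ∈ contSet P F μ₀ μ₁ σ ρ W → φ < φ' →
      (x, φ') ∈ contSet P F μ₀ μ₁ σ ρ W) :=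
  continuation_set_open_stopping_set_closed_connected_general (mΩ := mΩ) P F W μ₀ μ₁ σ ρ hμ₀ hρ hBM
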